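/- In the setting of Theorem 3.4, for any morphism f : A → B in C, the composite morphism (f, α_0)^T : A → B ⊕ X_1, where α_0 : A → X_1 is a left X-approximation, is X-monic; consequently there exists a right (n+2)-angle in C/X whose first morphism is the class of f (axiom RN1(c)). -/

import Mathlib

open CategoryTheory Limits

universe v u

variable {C : Type u} [Category.{v} C]

section Defs
variable [Preadditive C]

/-- `g` is a weak cokernel of `f`: `g ∘ f = 0` and every morphism killing `f`
factors (not necessarily uniquely) through `g`. -/
def IsWeakCokernel {A B X : C} (f : A ⟶ B) (g : B ⟶ X) : Prop :=
  f ≫ g = 0 ∧ ∀ ⦃D : C⦄ (h : B ⟶ D), f ≫ h = 0 → ∃ k : X ⟶ D, h = g ≫ k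

/-- `g` is a cokernel of `f`. -/
def IsCokernelOf {A B X : C} (f : A ⟶ B) (g : B ⟶ X) : Prop :=
  f ≫ g = 0 ∧ ∀ ⦃D : C⦄ (h : B ⟶ D), f ≫ h = 0 → ∃! k : X ⟶ D, h = g ≫ k

/-- `f` is a weak kernel of `g`. -/
def IsWeakKernel {A B X : C} (g : B ⟶ X) (f : A ⟶ B) : Prop :=
  f ≫ g = 0 ∧ ∀ ⦃D : C⦄ (h : D ⟶ B), h ≫ g = 0 → ∃ k : D ⟶ A, h = k ≫ f

/-- `f` is a kernel of `g`. -/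
def IsKernelOf {A B X : C} (g : B ⟶ X) (f : A ⟶ B) : Prop :=
  f ≫ g = 0 ∧ ∀ ⦃D : C⦄ (h : D ⟶ B), h ≫ g = 0 → ∃! k : D ⟶ A, h = k ≫ f

/-- The sequence `X 0 → X 1 → ⋯ → X (n+1)` is right `n`-exact, i.e.
`(d 1, …, d n)` is an `n`-cokernel of `d 0`: each `d (k+1)` with `k + 2 ≤ n` is a
weak cokernel of `d k`, and `d n` is a cokernel of `d (n-1)`. -/
def IsRightNExactSeq (n : ℕ) (X : ℕ → C) (d : ∀ i, X i ⟶ X (i + 1)) : Prop :=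
  (∀ k, k + 2 ≤ n → IsWeakCokernel (d k) (d (k + 1))) ∧ IsCokernelOf (d (n - 1)) (d (n - 1 + 1))

/-- The sequence `X 0 → X 1 → ⋯ → X (n+1)` is left `n`-exact. -/
def IsLeftNExactSeq (n : ℕ) (X : ℕ → C) (d : ∀ i, X i ⟶ X (i + 1)) : Prop :=
  (∀ k, k + 2 ≤ n → IsWeakKernel (d (k + 1)) (d k)) ∧ IsKernelOf (d 1) (d 0)

/-- `f : A ⟶ B` is `X`-monic with respect to the subcategory given by the predicate `P`:
every morphism from `A` to an object of `P` factors through `f`. -/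
def XMonic (P : C → Prop) {A B : C} (f : A ⟶ B) : Prop :=
  ∀ ⦃M : C⦄, P M → ∀ g : A ⟶ M, ∃ h : B ⟶ M, g = f ≫ h

/-- `f` is `X`-epic. -/
def XEpic (P : C → Prop) {A B : C} (f : A ⟶ B) : Prop :=
  ∀ ⦃M : C⦄, P M → ∀ g : M ⟶ B, ∃ h : M ⟶ A, g = h ≫ f

/-- `(-1)^k • f`. -/
def psign (k : ℕ) {A B : C} (f : A ⟶ B) : A ⟶ B := if Even k then f else -f

/-- `f : A ⟶ B` has an `n`-cokernel. -/
def HasNCokernel (n : ℕ) {A B : C} (f : A ⟶ B) : Prop :=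
  ∃ (X : ℕ → C) (d : ∀ i, X i ⟶ X (i + 1)) (e0 : X 0 = A) (e1 : X 1 = B),
    d 0 = eqToHom e0 ≫ f ≫ eqToHom e1.symm ∧ IsRightNExactSeq n X d

/-- `f : A ⟶ B` has a special `n`-cokernel with respect to `P`: an `n`-cokernel all of whose
intermediate objects lie in `P`. -/
def HasSpecialNCokernel (P : C → Prop) (n : ℕ) {A B : C} (f : A ⟶ B) : Prop :=
  ∃ (X : ℕ → C) (d : ∀ i, X i ⟶ X (i + 1)) (e0 : X 0 = A) (e1 : X 1 = B),
    d 0 = eqToHom e0 ≫ f ≫ eqToHom e1.symm ∧ IsRightNExactSeq n X d ∧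
    ∀ i, 2 ≤ i → i ≤ n → P (X i)

end Defs

section QuotCat
variable [Preadditive C]

/-- Morphisms factoring through an object of the subcategory `P`. -/
def xSet (P : C → Prop) (A B : C) : Set (A ⟶ B) :=
  {f | ∃ (M : C) (u : A ⟶ M) (v : M ⟶ B), P M ∧ f = u ≫ v}

/-- The ideal `[X](A,B)` of morphisms factoring through `P`, as an additive subgroup
(when `P` is closed under finite direct sums this is just `xSet P A B`). -/
def xSub (P : C → Prop) (A B : C) : AddSubgroup (A ⟶ B) :=
  AddSubgroup.closure (xSet P A B)

lemma xSub_comp_left (P : C → Prop) {A B C' : C} {f : A ⟶ B} (hf : f ∈ xSub P A B)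
    (g : B ⟶ C') : f ≫ g ∈ xSub P A C' := by
  induction hf using AddSubgroup.closure_induction with
  | mem x hx =>
      obtain ⟨M, u, v, hM, rfl⟩ := hx
      exact AddSubgroup.subset_closure ⟨M, u, v ≫ g, hM, by simp⟩
  | zero => simpa using (xSub P A C').zero_mem
  | add x y _ _ hx hy => simpa [Preadditive.add_comp] using (xSub P A C').add_mem hx hy
  | neg x _ hx => simpa [Preadditive.neg_comp] using (xSub P A C').neg_mem hx

lemma xSub_comp_right (P : C → Prop) {A B C' : C} (g : A ⟶ B) {f : B ⟶ C'}
    (hf : f ∈ xSub P B C') : g ≫ f ∈ xSub P A C' := by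
  induction hf using AddSubgroup.closure_induction with
  | mem x hx =>
      obtain ⟨M, u, v, hM, rfl⟩ := hx
      exact AddSubgroup.subset_closure ⟨M, g ≫ u, v, hM, by simp⟩
  | zero => simpa using (xSub P A C').zero_mem
  | add x y _ _ hx hy => simpa [Preadditive.comp_add] using (xSub P A C').add_mem hx hy
  | neg x _ hx => simpa [Preadditive.comp_neg] using (xSub P A C').neg_mem hx

/-- The quotient category `C/X`: same objects as `C`. -/
structure QObj (P : C → Prop) : Type u where
  obj : C

variable (P : C → Prop)

instance QObj.category : Category.{v} (QObj P) where
  Hom A B := (A.obj ⟶ B.obj) ⧸ xSub P A.obj B.obj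
  id A := QuotientAddGroup.mk (𝟙 A.obj)
  comp {A B C'} x y :=
    Quotient.liftOn₂ x y (fun a b => QuotientAddGroup.mk (a ≫ b)) (by
      intro a b a' b' ha hb
      have ha' : -a + a' ∈ xSub P _ _ := QuotientAddGroup.leftRel_apply.mp ha
      have hb' : -b + b' ∈ xSub P _ _ := QuotientAddGroup.leftRel_apply.mp hb
      apply Quotient.sound
      refine QuotientAddGroup.leftRel_apply.mpr ?_
      have : -(a ≫ b) + a' ≫ b' = (-a + a') ≫ b + a' ≫ (-b + b') := by
        simp [Preadditive.add_comp, Preadditive.comp_add]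
      rw [this]
      exact AddSubgroup.add_mem _ (xSub_comp_left P ha' b) (xSub_comp_right P a' hb'))
  id_comp x := by
    induction x using Quotient.inductionOn with
    | h a => exact congrArg QuotientAddGroup.mk (Category.id_comp a)
  comp_id x := by
    induction x using Quotient.inductionOn with
    | h a => exact congrArg QuotientAddGroup.mk (Category.comp_id a)
  assoc x y z := by
    induction x using Quotient.inductionOn with
    | h a =>
      induction y using Quotient.inductionOn with
      | h b =>
        induction z using Quotient.inductionOn with
        | h c => exact congrArg QuotientAddGroup.mk (Category.assoc a b c)

instance QObj.preadditive : Preadditive (QObj P) where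
  homGroup A B := inferInstanceAs (AddCommGroup ((A.obj ⟶ B.obj) ⧸ xSub P A.obj B.obj))
  add_comp A B C' x x' y := by
    induction x using Quotient.inductionOn with
    | h a =>
      induction x' using Quotient.inductionOn with
      | h a' =>
        induction y using Quotient.inductionOn with
        | h b => exact congrArg QuotientAddGroup.mk (Preadditive.add_comp _ _ _ a a' b)
  comp_add A B C' x y y' := by
    induction x using Quotient.inductionOn with
    | h a =>
      induction y using Quotient.inductionOn with
      | h b =>
        induction y' using Quotient.inductionOn with
        | h b' => exact congrArg QuotientAddGroup.mk (Preadditive.comp_add _ _ _ a b b')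

/-- The quotient functor `C ⥤ C/X`. -/
def toQ : C ⥤ QObj P where
  obj A := ⟨A⟩
  map f := QuotientAddGroup.mk f
  map_id _ := rfl
  map_comp _ _ := rfl

/-- Image of an object of `C` in `C/X`. -/
abbrev qObj (A : C) : QObj P := ⟨A⟩

/-- Image of a morphism of `C` in `C/X`. -/
abbrev qMap {A B : C} (f : A ⟶ B) : qObj P A ⟶ qObj P B := QuotientAddGroup.mk f

open ZeroObject in
instance [HasZeroObject C] : HasZeroObject (QObj P) := by
  refine ⟨qObj P 0, ?_⟩
  rw [IsZero.iff_id_eq_zero]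
  have h : (𝟙 (qObj P 0)) = qMap P (𝟙 (0 : C)) := rfl
  rw [h, show (𝟙 (0 : C)) = 0 from by simp]
  exact QuotientAddGroup.mk_zero (xSub P 0 0)

instance [HasBinaryBiproducts C] : HasBinaryBiproducts (QObj P) where
  has_binary_biproduct A B := by
    refine HasBinaryBiproduct.mk ⟨?_, ?_⟩
    · exact
        { pt := qObj P (A.obj ⊞ B.obj)
          fst := qMap P biprod.fst
          snd := qMap P biprod.snd
          inl := qMap P biprod.inl
          inr := qMap P biprod.inr
          inl_fst := congrArg (QuotientAddGroup.mk) biprod.inl_fst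
          inl_snd := congrArg (QuotientAddGroup.mk) biprod.inl_snd
          inr_fst := congrArg (QuotientAddGroup.mk) biprod.inr_fst
          inr_snd := congrArg (QuotientAddGroup.mk) biprod.inr_snd }
    · apply isBinaryBilimitOfTotal
      show qMap P biprod.fst ≫ qMap P biprod.inl + qMap P biprod.snd ≫ qMap P biprod.inr = qMap P (𝟙 _)
      show qMap P (biprod.fst ≫ biprod.inl) + qMap P (biprod.snd ≫ biprod.inr) = _
      rw [show qMap P (biprod.fst ≫ biprod.inl) + qMap P (biprod.snd ≫ biprod.inr)
            = qMap P (biprod.fst ≫ biprod.inl + biprod.snd ≫ biprod.inr) from rfl]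
      exact congrArg QuotientAddGroup.mk biprod.total

end QuotCat

section Angulated
set_option linter.unusedSectionVars false
open ZeroObject
variable [Preadditive C]

/-- An `m`-`Σ`-sequence `X 0 → X 1 → ⋯ → X (m-1) → S.obj (X 0)`, encoded as a
`Σ`-periodic complex: `X (m+i) = S.obj (X i)` and `f (m+i) = (-1)^m • S.map (f i)`
(the sign convention of left rotation is built into the periodicity). -/
structure PSeq (m : ℕ) (S : C ⥤ C) where
  X : ℕ → C
  f : ∀ i, X i ⟶ X (i + 1)
  per : ∀ i, X (m + i) = S.obj (X i)
  fper : ∀ i, f (m + i) = eqToHom (per i) ≫ psign m (S.map (f i)) ≫ eqToHom (per (i + 1)).symm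

variable {m : ℕ} {S : C ⥤ C}

/-- The last structural morphism `X (m-1) ⟶ S.obj (X 0)` of an `m`-`Σ`-sequence. -/
def PSeq.wmap (T : PSeq m S) (hm : 1 ≤ m) : T.X (m - 1) ⟶ S.obj (T.X 0) :=
  T.f (m - 1) ≫ eqToHom (by rw [show m - 1 + 1 = m + 0 by omega]; exact T.per 0)

/-- Left rotation of an `m`-`Σ`-sequence. -/
def PSeq.rot (T : PSeq m S) : PSeq m S where
  X i := T.X (i + 1)
  f i := T.f (i + 1)
  per i := T.per (i + 1)
  fper i := T.fper (i + 1)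

/-- A morphism of `m`-`Σ`-sequences. -/
structure SeqHomP (T U : PSeq m S) where
  φ : ∀ i, T.X i ⟶ U.X i
  comm : ∀ i, T.f i ≫ φ (i + 1) = φ i ≫ U.f i
  compat : ∀ i, φ (m + i) = eqToHom (T.per i) ≫ S.map (φ i) ≫ eqToHom (U.per i).symm

/-- Isomorphism of `m`-`Σ`-sequences. -/
def SeqIsoP (T U : PSeq m S) : Prop :=
  ∃ h : SeqHomP T U, ∀ i, IsIso (h.φ i)

/-- `V` is a direct sum of the `m`-`Σ`-sequences `T` and `U`. -/
def IsDirectSumOf (V T U : PSeq m S) : Prop :=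
  ∃ (p : SeqHomP V T) (q : SeqHomP V U) (s : SeqHomP T V) (t : SeqHomP U V),
    (∀ i, s.φ i ≫ p.φ i = 𝟙 _) ∧ (∀ i, t.φ i ≫ q.φ i = 𝟙 _) ∧
    (∀ i, s.φ i ≫ q.φ i = 0) ∧ (∀ i, t.φ i ≫ p.φ i = 0) ∧
    (∀ i, p.φ i ≫ s.φ i + q.φ i ≫ t.φ i = 𝟙 _)

/-- The `m`-`Σ`-sequence `T` has window `A 0 → A 1 → ⋯ → A (m-1) → S.obj (A 0)`. -/
def IsWindowOf (hm : 1 ≤ m) (T : PSeq m S) (A : ℕ → C) (d : ∀ i, A i ⟶ A (i + 1))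
    (w : A (m - 1) ⟶ S.obj (A 0)) : Prop :=
  ∃ e : ∀ j, j ≤ m - 1 → T.X j = A j,
    (∀ j (hj : j + 2 ≤ m),
      T.f j = eqToHom (e j (by omega)) ≫ d j ≫ eqToHom (e (j + 1) (by omega)).symm) ∧
    T.wmap hm ≫ eqToHom (congrArg S.obj (e 0 (by omega))) = eqToHom (e (m - 1) le_rfl) ≫ w

section Oct
variable [HasZeroObject C] [HasBinaryBiproducts C]
variable (T U V : PSeq m S)

/-- First padded component of the higher mapping cone of (RN4). -/
noncomputable def padT (j : ℕ) : C := if j + 2 ≤ m - 1 then T.X (j + 2) else 0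

/-- Second padded component. -/
noncomputable def padU (j : ℕ) : C := if 1 ≤ j ∧ j + 1 ≤ m - 1 then U.X (j + 1) else 0

/-- Third padded component. -/
noncomputable def padV (j : ℕ) : C := if (2 ≤ j ∧ j ≤ m - 1) ∨ j = m - 2 then V.X j else 0

lemma padT_eq {j : ℕ} (h : j + 2 ≤ m - 1) : padT (m := m) T j = T.X (j + 2) := if_pos h
lemma padU_eq {j : ℕ} (h : 1 ≤ j ∧ j + 1 ≤ m - 1) : padU (m := m) U j = U.X (j + 1) := if_pos h
lemma padV_eq {j : ℕ} (h : (2 ≤ j ∧ j ≤ m - 1) ∨ j = m - 2) : padV (m := m) V j = V.X j :=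
  if_pos h

/-- Objects of the higher mapping cone of (RN4) (padded by zero objects). -/
noncomputable def coneObjOct (j : ℕ) : C := (padT T j ⊞ padU U j) ⊞ padV V j

variable (φ : ∀ i, T.X i ⟶ U.X i) (ψ : ∀ i, U.X i ⟶ V.X i) (θ : ∀ i, T.X (i + 1) ⟶ V.X i)

/-- `T`–`T` entry of the cone differential: `f 3` (resp. `-f (j+2)`). -/
noncomputable def entTT (j : ℕ) : padT (m := m) T j ⟶ padT (m := m) T (j + 1) :=
  if h : j + 2 ≤ m - 1 ∧ j + 3 ≤ m - 1 then
    eqToHom (padT_eq T h.1) ≫ (if j = 0 then T.f (j + 2) else -T.f (j + 2)) ≫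
      eqToHom (padT_eq T h.2).symm
  else 0

/-- `T`–`U` entry: `± φ (j+2)`. -/
noncomputable def entTU (j : ℕ) : padT (m := m) T j ⟶ padU (m := m) U (j + 1) :=
  if h : j + 2 ≤ m - 1 then
    eqToHom (padT_eq T h) ≫
      (if j = 0 ∧ 4 ≤ m then φ (j + 2) else psign (j + 1) (φ (j + 2))) ≫
      eqToHom (padU_eq U ⟨by omega, by omega⟩).symm
  else 0

/-- `T`–`V` entry: `θ (j+1)`. -/
noncomputable def entTV (j : ℕ) : padT (m := m) T j ⟶ padV (m := m) V (j + 1) :=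
  if h : (j + 2 ≤ m - 1) ∧ ((2 ≤ j + 1 ∧ j + 1 ≤ m - 1) ∨ j + 1 = m - 2) then
    eqToHom (padT_eq T h.1) ≫ θ (j + 1) ≫ eqToHom (padV_eq V h.2).symm
  else 0

/-- `U`–`U` entry: `-g (j+1)`. -/
noncomputable def entUU (j : ℕ) : padU (m := m) U j ⟶ padU (m := m) U (j + 1) :=
  if h : (1 ≤ j ∧ j + 1 ≤ m - 1) ∧ (1 ≤ j + 1 ∧ j + 2 ≤ m - 1) then
    eqToHom (padU_eq U h.1) ≫ (-U.f (j + 1)) ≫ eqToHom (padU_eq U h.2).symm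
  else 0

/-- `U`–`V` entry: `ψ (j+1)`. -/
noncomputable def entUV (j : ℕ) : padU (m := m) U j ⟶ padV (m := m) V (j + 1) :=
  if h : (1 ≤ j ∧ j + 1 ≤ m - 1) ∧ ((2 ≤ j + 1 ∧ j + 1 ≤ m - 1) ∨ j + 1 = m - 2) then
    eqToHom (padU_eq U h.1) ≫ ψ (j + 1) ≫ eqToHom (padV_eq V h.2).symm
  else 0

/-- `V`–`V` entry: `h (j)`. -/
noncomputable def entVV (j : ℕ) : padV (m := m) V j ⟶ padV (m := m) V (j + 1) :=
  if h : ((2 ≤ j ∧ j ≤ m - 1) ∨ j = m - 2) ∧ ((2 ≤ j + 1 ∧ j + 1 ≤ m - 1) ∨ j + 1 = m - 2) then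
    eqToHom (padV_eq V h.1) ≫ V.f j ≫ eqToHom (padV_eq V h.2).symm
  else 0

/-- The differentials of the higher mapping cone of (RN4): the lower-triangular matrices
`[[±f, 0, 0], [±φ, -g, 0], [θ, ψ, h]]` of the paper. -/
noncomputable def coneMapOct (j : ℕ) : coneObjOct (m := m) T U V j ⟶ coneObjOct (m := m) T U V (j + 1) :=
  biprod.desc
    (biprod.desc
      (biprod.lift (biprod.lift (entTT T j) (entTU T U φ j)) (entTV T V θ j))
      (biprod.lift (biprod.lift 0 (entUU U j)) (entUV U V ψ j)))
    (biprod.lift (biprod.lift 0 0) (entVV V j))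

/-- The last morphism of the higher mapping cone: `Σ f 2 ∘ h (m-1)`. -/
noncomputable def coneLastOct (hm : 3 ≤ m) (eV0 : V.X 0 = T.X 1) :
    coneObjOct (m := m) T U V (m - 1) ⟶ S.obj (coneObjOct (m := m) T U V 0) :=
  biprod.snd ≫ eqToHom (padV_eq V (by omega)) ≫ V.wmap (by omega) ≫
    eqToHom (congrArg S.obj eV0) ≫ S.map (T.f 1) ≫
    S.map (eqToHom (padT_eq T (by omega : 0 + 2 ≤ m - 1)).symm ≫ biprod.inl ≫ biprod.inl)

end Oct

/-- The higher octahedral axiom (RN4). -/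
def OctCondition (m : ℕ) (hm : 3 ≤ m) [HasZeroObject C] [HasBinaryBiproducts C]
    (S : C ⥤ C) (Θ : Set (PSeq m S)) : Prop :=
  ∀ (T U V : PSeq m S), T ∈ Θ → U ∈ Θ → V ∈ Θ →
  ∀ (e0 : U.X 0 = T.X 0) (eV0 : V.X 0 = T.X 1) (eV1 : V.X 1 = U.X 1),
    U.f 0 = eqToHom e0 ≫ T.f 0 ≫ eqToHom eV0.symm ≫ V.f 0 ≫ eqToHom eV1 →
    ∃ (h : SeqHomP T U) (ψ : ∀ i, U.X i ⟶ V.X i) (θ : ∀ i, T.X (i + 1) ⟶ V.X i),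
      h.φ 0 = eqToHom e0.symm ∧
      h.φ 1 = eqToHom eV0.symm ≫ V.f 0 ≫ eqToHom eV1 ∧
      (ψ (m - 1) ≫ V.wmap (by omega) ≫ eqToHom (congrArg S.obj eV0) =
        U.wmap (by omega) ≫ eqToHom (congrArg S.obj e0) ≫ S.map (T.f 0)) ∧
      ∃ W ∈ Θ, ∃ e : ∀ j, j ≤ m - 1 → W.X j = coneObjOct T U V j,
        (∀ j (hj : j + 2 ≤ m),
          W.f j = eqToHom (e j (by omega)) ≫ coneMapOct T U V h.φ ψ θ j ≫
            eqToHom (e (j + 1) (by omega)).symm) ∧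
        (W.wmap (by omega) ≫ eqToHom (congrArg S.obj (e 0 (by omega))) =
          eqToHom (e (m - 1) le_rfl) ≫ coneLastOct T U V hm eV0)

/-- A right `m`-angulated structure: `(C, S, Θ)` satisfies the axioms (RN1)–(RN4). -/
structure IsRightAngulated (m : ℕ) [HasZeroObject C] [HasBinaryBiproducts C]
    (S : C ⥤ C) (Θ : Set (PSeq m S)) : Prop where
  hm : 3 ≤ m
  /-- (RN1)(a): closed under isomorphisms -/
  isoClosed : ∀ T ∈ Θ, ∀ U, SeqIsoP T U → U ∈ Θ
  /-- (RN1)(a): closed under direct sums -/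
  sumClosed : ∀ T ∈ Θ, ∀ U ∈ Θ, ∀ V, IsDirectSumOf V T U → V ∈ Θ
  /-- (RN1)(a): closed under direct summands -/
  summandClosed : ∀ V ∈ Θ, ∀ T U, IsDirectSumOf V T U → T ∈ Θ
  /-- (RN1)(b): trivial sequences -/
  trivialMem : ∀ A : C, ∃ T ∈ Θ, ∃ (e0 : T.X 0 = A) (e1 : T.X 1 = A),
    T.f 0 = eqToHom (e0.trans e1.symm) ∧ ∀ i, 2 ≤ i → i ≤ m - 1 → IsZero (T.X i)
  /-- (RN1)(c): every morphism is the first morphism of a right `m`-angle -/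
  extend : ∀ {A B : C} (u : A ⟶ B), ∃ T ∈ Θ, ∃ (e0 : T.X 0 = A) (e1 : T.X 1 = B),
    T.f 0 = eqToHom e0 ≫ u ≫ eqToHom e1.symm
  /-- (RN2): closed under left rotation -/
  rotate : ∀ T ∈ Θ, T.rot ∈ Θ
  /-- (RN3): completion of commutative squares -/
  complete : ∀ T ∈ Θ, ∀ U ∈ Θ, ∀ (φ0 : T.X 0 ⟶ U.X 0) (φ1 : T.X 1 ⟶ U.X 1),
    T.f 0 ≫ φ1 = φ0 ≫ U.f 0 → ∃ h : SeqHomP T U, h.φ 0 = φ0 ∧ h.φ 1 = φ1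
  /-- (RN4): higher octahedral axiom -/
  oct : OctCondition m hm S Θ

/-- An `m`-angulated structure in the sense of Geiss–Keller–Oppermann: a right
`m`-angulated structure in which `S` is an equivalence and the rotation condition
is necessary and sufficient. -/
def IsNAngulated (m : ℕ) [HasZeroObject C] [HasBinaryBiproducts C]
    (S : C ⥤ C) (Θ : Set (PSeq m S)) : Prop :=
  IsRightAngulated m S Θ ∧ S.IsEquivalence ∧ ∀ T : PSeq m S, T.rot ∈ Θ → T ∈ Θ

end Angulated

/-!
`(f, α₀)ᵀ` is `X`-monic because every map from `A` to an object of `X` already factors through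
its second component `α₀`. Choose an `n`-cokernel of it. The comparison lemma (`X`-monic in
degree `0` against `X₁ ∈ X`, weak cokernels above) gives a chain map from it to the chosen
`n`-cokernel of `α₀`; continuing the sequence by the latter makes the chain map total, so the
`n`-cokernel underlies a standard right `(n+2)`-angle. In `C/X` the projection
`B ⊕ X₁ → B` is an isomorphism, since the complementary idempotent factors through `X₁`;
replacing `B ⊕ X₁` by `B` yields an isomorphic right `(n+2)`-angle starting with `[f]`.
-/

section Exactness
variable [Preadditive C]

lemma IsWeakCokernel.eqToHom_conj {A A' B B' X X' : C} {f : A ⟶ B} {g : B ⟶ X}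
    (eA : A' = A) (eB : B' = B) (eX : X' = X) (h : IsWeakCokernel f g) :
    IsWeakCokernel (eqToHom eA ≫ f ≫ eqToHom eB.symm) (eqToHom eB ≫ g ≫ eqToHom eX.symm) := by
  subst eA eB eX; simpa using h

lemma IsCokernelOf.eqToHom_conj {A A' B B' X X' : C} {f : A ⟶ B} {g : B ⟶ X}
    (eA : A' = A) (eB : B' = B) (eX : X' = X) (h : IsCokernelOf f g) :
    IsCokernelOf (eqToHom eA ≫ f ≫ eqToHom eB.symm) (eqToHom eB ≫ g ≫ eqToHom eX.symm) := by
  subst eA eB eX; simpa using h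

variable {n : ℕ} {Y : ℕ → C} {d : ∀ i, Y i ⟶ Y (i + 1)}

lemma IsRightNExactSeq.isWeakCokernel (h : IsRightNExactSeq n Y d) (hn : 1 ≤ n) {i : ℕ}
    (hi : i + 1 ≤ n) : IsWeakCokernel (d i) (d (i + 1)) := by
  rcases Nat.lt_or_ge (i + 1) n with hlt | hge
  · exact h.1 i hlt
  · obtain rfl : i = n - 1 := by omega
    exact ⟨h.2.1, fun D k hk => (h.2.2 k hk).exists⟩

lemma IsRightNExactSeq.comp_eq_zero (h : IsRightNExactSeq n Y d) (hn : 1 ≤ n) {i : ℕ}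
    (hi : i + 1 ≤ n) : d i ≫ d (i + 1) = 0 :=
  (h.isWeakCokernel hn hi).1

lemma IsRightNExactSeq.of_eqToHom_conj {Y' : ℕ → C} {d' : ∀ i, Y' i ⟶ Y' (i + 1)}
    (hn : 1 ≤ n) (e : ∀ i, i ≤ n + 1 → Y' i = Y i)
    (hd : ∀ i (hi : i ≤ n),
      d' i = eqToHom (e i (by omega)) ≫ d i ≫ eqToHom (e (i + 1) (by omega)).symm)
    (h : IsRightNExactSeq n Y d) : IsRightNExactSeq n Y' d' := by
  refine ⟨fun k hk => ?_, ?_⟩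
  · rw [hd k (by omega), hd (k + 1) (by omega)]
    exact (h.1 k hk).eqToHom_conj _ _ (e (k + 2) (by omega))
  · rw [hd (n - 1) (by omega), hd (n - 1 + 1) (by omega)]
    exact h.2.eqToHom_conj _ _ (e (n - 1 + 2) (by omega))

end Exactness

section XMonic
variable {P : C → Prop}

lemma XMonic.isIso_comp {A A' B : C} {f : A ⟶ B} (hf : XMonic P f) (i : A' ⟶ A) [IsIso i] :
    XMonic P (i ≫ f) := by
  intro M hM g
  obtain ⟨h, hh⟩ := hf hM (inv i ≫ g)
  exact ⟨h, by simp [← hh]⟩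

lemma XMonic.comp_isIso {A B B' : C} {f : A ⟶ B} (hf : XMonic P f) (i : B ⟶ B') [IsIso i] :
    XMonic P (f ≫ i) := by
  intro M hM g
  obtain ⟨h, hh⟩ := hf hM g
  exact ⟨inv i ≫ h, by simp [hh]⟩

lemma XMonic.biprod_lift [Preadditive C] [HasBinaryBiproducts C] {A B M : C} {g : A ⟶ M}
    (hg : XMonic P g) (f : A ⟶ B) : XMonic P (biprod.lift f g) := by
  intro N hN t
  obtain ⟨h, hh⟩ := hg hN t
  exact ⟨biprod.snd ≫ h, by simp [hh]⟩

end XMonic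

section Splice
variable {n : ℕ} {Y Z : ℕ → C} {d : ∀ i, Y i ⟶ Y (i + 1)} {δ : ∀ i, Z i ⟶ Z (i + 1)}

/-- `Y'` is `Y` up to degree `n + 1` and `Z` afterwards, with `d' (n + 1) = a (n + 1) ≫ δ (n + 1)`
and `a'` the identity beyond degree `n + 1`. -/
lemma exists_splice (a : ∀ i, Y i ⟶ Z i) (ha : ∀ i, i ≤ n → d i ≫ a (i + 1) = a i ≫ δ i) :
    ∃ (Y' : ℕ → C) (d' : ∀ i, Y' i ⟶ Y' (i + 1)) (a' : ∀ i, Y' i ⟶ Z i)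
      (e : ∀ i, i ≤ n + 1 → Y' i = Y i),
      (∀ i (hi : i ≤ n),
        d' i = eqToHom (e i (by omega)) ≫ d i ≫ eqToHom (e (i + 1) (by omega)).symm) ∧
      (∀ i (hi : i ≤ n + 1), a' i = eqToHom (e i hi) ≫ a i) ∧
      ∀ i, d' i ≫ a' (i + 1) = a' i ≫ δ i := by
  let Y' : ℕ → C := fun i => if i ≤ n + 1 then Y i else Z i
  have hle : ∀ i, i ≤ n + 1 → Y' i = Y i := fun i hi => if_pos hi
  have hgt : ∀ i, n + 1 < i → Y' i = Z i := fun i hi => if_neg (by omega)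
  let a' : ∀ i, Y' i ⟶ Z i := fun i =>
    if hi : i ≤ n + 1 then eqToHom (hle i hi) ≫ a i else eqToHom (hgt i (by omega))
  let d' : ∀ i, Y' i ⟶ Y' (i + 1) := fun i =>
    if hi : i ≤ n then eqToHom (hle i (by omega)) ≫ d i ≫ eqToHom (hle (i + 1) (by omega)).symm
    else a' i ≫ δ i ≫ eqToHom (hgt (i + 1) (by omega)).symm
  refine ⟨Y', d', a', hle, fun i hi => dif_pos hi, fun i hi => dif_pos hi, fun i => ?_⟩
  by_cases hi : i ≤ n
  · simp [d', a', hi, show i + 1 ≤ n + 1 by omega, show i ≤ n + 1 by omega, ha i hi]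
  · simp [d', hi, a', show ¬ i + 1 ≤ n + 1 by omega]

end Splice

section Comparison
variable [Preadditive C] {P : C → Prop} {n : ℕ} {Y Z : ℕ → C}
  {d : ∀ i, Y i ⟶ Y (i + 1)} {δ : ∀ i, Z i ⟶ Z (i + 1)}

lemma exists_chainMap_of_xMonic (hn : 1 ≤ n) (hY : IsRightNExactSeq n Y d)
    (hd0 : XMonic P (d 0)) (hZ1 : P (Z 1)) (hδ : ∀ i, i + 1 ≤ n → δ i ≫ δ (i + 1) = 0)
    (a0 : Y 0 ⟶ Z 0) :
    ∃ a : ∀ i, Y i ⟶ Z i, a 0 = a0 ∧ ∀ i, i ≤ n → d i ≫ a (i + 1) = a i ≫ δ i := by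
  suffices H : ∀ N, N ≤ n + 1 → ∃ a : ∀ i, Y i ⟶ Z i,
      a 0 = a0 ∧ ∀ i, i < N → d i ≫ a (i + 1) = a i ≫ δ i by
    obtain ⟨a, ha0, ha⟩ := H (n + 1) le_rfl
    exact ⟨a, ha0, fun i hi => ha i (by omega)⟩
  intro N hN
  induction N with
  | zero => exact ⟨Function.update 0 0 a0, Function.update_self .., by simp⟩
  | succ N ih =>
    obtain ⟨a, ha0, ha⟩ := ih (by omega)
    obtain ⟨b, hb⟩ : ∃ b : Y (N + 1) ⟶ Z (N + 1), a N ≫ δ N = d N ≫ b := by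
      rcases N with _ | N
      · exact hd0 hZ1 _
      · refine (hY.isWeakCokernel hn (by omega)).2 _ ?_
        rw [reassoc_of% (ha N (by omega)), hδ N (by omega), comp_zero]
    refine ⟨Function.update a (N + 1) b, by simp [ha0], fun i hi => ?_⟩
    rcases Nat.lt_or_ge i N with hlt | hge
    · rw [Function.update_of_ne (by omega), Function.update_of_ne (by omega), ha i hlt]
    · obtain rfl : i = N := by omega
      rw [Function.update_self, Function.update_of_ne (by omega), hb]

end Comparison

section WindowObj
variable (S : C ⥤ C) {m : ℕ}

noncomputable def windowObj (W : ℕ → C) (hm : 1 ≤ m) : ℕ → C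
  | i => if i < m then W i else S.obj (windowObj W hm (i - m))
termination_by i => i
decreasing_by omega

variable {S} {W : ℕ → C} {hm : 1 ≤ m}

lemma windowObj_of_lt {i : ℕ} (h : i < m) : windowObj S W hm i = W i := by
  rw [windowObj]; exact if_pos h

lemma windowObj_of_le {i : ℕ} (h : m ≤ i) :
    windowObj S W hm i = S.obj (windowObj S W hm (i - m)) := by
  rw [windowObj]; exact if_neg (by omega)

lemma windowObj_add (i : ℕ) : windowObj S W hm (m + i) = S.obj (windowObj S W hm i) := by
  rw [windowObj_of_le (by omega), Nat.add_sub_cancel_left]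

lemma windowObj_succ_of_le {i : ℕ} (h : m ≤ i) :
    windowObj S W hm (i + 1) = S.obj (windowObj S W hm (i - m + 1)) := by
  rw [windowObj_of_le (by omega), show i + 1 - m = i - m + 1 by omega]

variable (S) in
lemma windowObj_succ_of_eq {i : ℕ} (h : m = i + 1) :
    windowObj S W hm (i + 1) = S.obj (W 0) := by
  rw [windowObj_of_le (by omega), show i + 1 - m = 0 by omega, windowObj_of_lt hm]

variable {W' : ℕ → C}

variable (S hm) in
noncomputable def windowHom (φ : ∀ j, W j ⟶ W' j) : ∀ i, windowObj S W hm i ⟶ windowObj S W' hm i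
  | i =>
    if h : i < m then eqToHom (windowObj_of_lt h) ≫ φ i ≫ eqToHom (windowObj_of_lt h).symm
    else
      eqToHom (windowObj_of_le (by omega)) ≫ S.map (windowHom φ (i - m)) ≫
        eqToHom (windowObj_of_le (by omega)).symm
termination_by i => i
decreasing_by omega

variable {φ : ∀ j, W j ⟶ W' j}

lemma windowHom_of_lt {i : ℕ} (h : i < m) :
    windowHom S hm φ i = eqToHom (windowObj_of_lt h) ≫ φ i ≫ eqToHom (windowObj_of_lt h).symm := by
  rw [windowHom]; exact dif_pos h

lemma windowHom_of_le {i : ℕ} (h : m ≤ i) :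
    windowHom S hm φ i = eqToHom (windowObj_of_le h) ≫ S.map (windowHom S hm φ (i - m)) ≫
      eqToHom (windowObj_of_le h).symm := by
  rw [windowHom]; exact dif_neg (by omega)

lemma windowHom_congr {i i' : ℕ} (h : i = i') :
    windowHom S hm φ i = eqToHom (congrArg (windowObj S W hm) h) ≫ windowHom S hm φ i' ≫
      eqToHom (congrArg (windowObj S W' hm) h).symm := by
  subst h; simp

lemma windowHom_add (i : ℕ) :
    windowHom S hm φ (m + i) = eqToHom (windowObj_add i) ≫ S.map (windowHom S hm φ i) ≫
      eqToHom (windowObj_add i).symm := by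
  rw [windowHom_of_le (by omega), windowHom_congr (show m + i - m = i by omega)]
  simp only [Functor.map_comp, eqToHom_map, Category.assoc, eqToHom_trans, eqToHom_trans_assoc]

lemma isIso_windowHom (hφ : ∀ j, j < m → IsIso (φ j)) (i : ℕ) : IsIso (windowHom S hm φ i) := by
  induction i using Nat.strong_induction_on with
  | _ i ih =>
    rcases Nat.lt_or_ge i m with h | h
    · rw [windowHom_of_lt h]
      have := hφ i h
      infer_instance
    · rw [windowHom_of_le h]
      have := ih (i - m) (by omega)
      infer_instance

end WindowObj

section WindowMap
variable [Preadditive C]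

lemma psign_comp (k : ℕ) {A B D : C} (x : A ⟶ B) (y : B ⟶ D) :
    psign k x ≫ y = psign k (x ≫ y) := by
  unfold psign; split <;> simp

lemma comp_psign (k : ℕ) {A B D : C} (x : A ⟶ B) (y : B ⟶ D) :
    x ≫ psign k y = psign k (x ≫ y) := by
  unfold psign; split <;> simp

variable (S : C ⥤ C) {m : ℕ} {W : ℕ → C}

noncomputable def windowMap (hm : 1 ≤ m) (g : ∀ j, W j ⟶ W (j + 1))
    (w : W (m - 1) ⟶ S.obj (W 0)) : ∀ i, windowObj S W hm i ⟶ windowObj S W hm (i + 1)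
  | i =>
    if h1 : i + 1 < m then
      eqToHom (windowObj_of_lt (by omega)) ≫ g i ≫ eqToHom (windowObj_of_lt h1).symm
    else if h2 : i < m then
      eqToHom ((windowObj_of_lt h2).trans (congrArg W (by omega))) ≫ w ≫
        eqToHom (windowObj_succ_of_eq S (by omega)).symm
    else
      eqToHom (windowObj_of_le (by omega)) ≫ psign m (S.map (windowMap hm g w (i - m))) ≫
        eqToHom (windowObj_succ_of_le (by omega)).symm
termination_by i => i
decreasing_by omega

variable {S} {hm : 1 ≤ m} {g : ∀ j, W j ⟶ W (j + 1)} {w : W (m - 1) ⟶ S.obj (W 0)}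

lemma windowMap_of_lt {i : ℕ} (h : i + 1 < m) :
    windowMap S hm g w i =
      eqToHom (windowObj_of_lt (by omega)) ≫ g i ≫ eqToHom (windowObj_of_lt h).symm := by
  rw [windowMap]; exact dif_pos h

lemma windowMap_of_eq {i : ℕ} (h : m = i + 1) :
    windowMap S hm g w i =
      eqToHom ((windowObj_of_lt (by omega)).trans (congrArg W (by omega))) ≫ w ≫
        eqToHom (windowObj_succ_of_eq S h).symm := by
  rw [windowMap, dif_neg (by omega), dif_pos (by omega)]

lemma windowMap_of_le {i : ℕ} (h : m ≤ i) :
    windowMap S hm g w i =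
      eqToHom (windowObj_of_le h) ≫ psign m (S.map (windowMap S hm g w (i - m))) ≫
        eqToHom (windowObj_succ_of_le h).symm := by
  rw [windowMap, dif_neg (by omega), dif_neg (by omega)]

lemma windowMap_congr {i i' : ℕ} (h : i = i') :
    windowMap S hm g w i = eqToHom (congrArg (windowObj S W hm) h) ≫ windowMap S hm g w i' ≫
      eqToHom (congrArg (windowObj S W hm) (congrArg (· + 1) h)).symm := by
  subst h; simp

lemma windowMap_add (i : ℕ) :
    windowMap S hm g w (m + i) = eqToHom (windowObj_add i) ≫
      psign m (S.map (windowMap S hm g w i)) ≫ eqToHom (windowObj_add (i + 1)).symm := by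
  rw [windowMap_of_le (by omega), windowMap_congr (show m + i - m = i by omega)]
  simp only [Functor.map_comp, eqToHom_map, comp_psign, psign_comp, Category.assoc,
    eqToHom_trans, eqToHom_trans_assoc]

variable (S W hm g w) in
-- Reducible, so that `simp` merges `eqToHom`s between `(ofWindow ..).X i` and `windowObj .. i`.
noncomputable abbrev PSeq.ofWindow : PSeq m S where
  X := windowObj S W hm
  f := windowMap S hm g w
  per := windowObj_add
  fper := windowMap_add

lemma PSeq.isWindowOf_ofWindow : IsWindowOf hm (PSeq.ofWindow S W hm g w) W g w := by
  refine ⟨fun j hj => windowObj_of_lt (by omega), fun j hj => windowMap_of_lt (by omega), ?_⟩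
  simp [PSeq.wmap, windowMap_of_eq (show m = m - 1 + 1 by omega)]


variable {W' : ℕ → C} {g' : ∀ j, W' j ⟶ W' (j + 1)} {w' : W' (m - 1) ⟶ S.obj (W' 0)}

variable {φ : ∀ j, W j ⟶ W' j}

lemma windowHom_comm (hg : ∀ j, j + 2 ≤ m → g j ≫ φ (j + 1) = φ j ≫ g' j)
    (hw : w ≫ S.map (φ 0) = φ (m - 1) ≫ w') (i : ℕ) :
    windowMap S hm g w i ≫ windowHom S hm φ (i + 1) =
      windowHom S hm φ i ≫ windowMap S hm g' w' i := by
  induction i using Nat.strong_induction_on with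
  | _ i ih =>
    rcases Nat.lt_or_ge (i + 1) m with h | h
    · rw [windowMap_of_lt h, windowMap_of_lt h, windowHom_of_lt h, windowHom_of_lt (by omega)]
      simp [reassoc_of% (hg i (by omega))]
    rcases Nat.lt_or_ge i m with h' | h'
    · obtain rfl : i = m - 1 := by omega
      rw [windowMap_of_eq (by omega), windowMap_of_eq (by omega), windowHom_of_lt h',
        windowHom_of_le h, windowHom_congr (show m - 1 + 1 - m = 0 by omega),
        windowHom_of_lt hm]
      simp only [Functor.map_comp, eqToHom_map, Category.assoc, eqToHom_trans_assoc,
        eqToHom_refl, Category.id_comp]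
      rw [reassoc_of% hw, eqToHom_trans]
    · rw [windowMap_of_le h', windowMap_of_le h', windowHom_of_le h', windowHom_of_le h,
        windowHom_congr (show i + 1 - m = i - m + 1 by omega)]
      simp only [Functor.map_comp, eqToHom_map, Category.assoc, eqToHom_trans_assoc,
        eqToHom_refl, Category.id_comp]
      rw [← Category.assoc (psign m _), psign_comp, ← Category.assoc (S.map _) (psign m _),
        comp_psign, ← S.map_comp, ← S.map_comp, ih (i - m) (by omega), eqToHom_trans]

variable (S hm) in
noncomputable def SeqHomP.ofWindow (hg : ∀ j, j + 2 ≤ m → g j ≫ φ (j + 1) = φ j ≫ g' j)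
    (hw : w ≫ S.map (φ 0) = φ (m - 1) ≫ w') :
    SeqHomP (PSeq.ofWindow S W hm g w) (PSeq.ofWindow S W' hm g' w') where
  φ := windowHom S hm φ
  comm := windowHom_comm hg hw
  compat := windowHom_add

lemma PSeq.seqIsoP_ofWindow_of_iso (e : ∀ j, W j ≅ W' j) :
    SeqIsoP (PSeq.ofWindow S W hm g w) (PSeq.ofWindow S W' hm
      (fun j => (e j).inv ≫ g j ≫ (e (j + 1)).hom) ((e (m - 1)).inv ≫ w ≫ S.map (e 0).hom)) :=
  ⟨SeqHomP.ofWindow S hm (φ := fun j => (e j).hom) (fun j _ => by simp) (by simp),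
    isIso_windowHom fun j _ => inferInstance⟩

abbrev replaceAtOne (W : ℕ → C) (B : C) : ℕ → C
  | 0 => W 0
  | 1 => B
  | j + 2 => W (j + 2)

def replaceAtOneIso (W : ℕ → C) {B : C} (e : W 1 ≅ B) : ∀ j, W j ≅ replaceAtOne W B j
  | 0 => Iso.refl _
  | 1 => e
  | _ + 2 => Iso.refl _

lemma PSeq.exists_seqIsoP_ofWindow_f_zero_comp {B : C} (hm2 : 2 ≤ m) (e : W 1 ≅ B) :
    ∃ T : PSeq m S, SeqIsoP (PSeq.ofWindow S W hm g w) T ∧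
      ∃ (e0 : T.X 0 = W 0) (e1 : T.X 1 = B),
        T.f 0 = eqToHom e0 ≫ g 0 ≫ e.hom ≫ eqToHom e1.symm := by
  refine ⟨_, PSeq.seqIsoP_ofWindow_of_iso (replaceAtOneIso W e), windowObj_of_lt (by omega),
    windowObj_of_lt (by omega), ?_⟩
  simp [windowMap_of_lt (show 0 + 1 < m by omega), replaceAtOneIso]

end WindowMap

section Quotient
variable [Preadditive C] (P : C → Prop)

lemma qMap_comp {A B D : C} (f : A ⟶ B) (g : B ⟶ D) :
    qMap P (f ≫ g) = qMap P f ≫ qMap P g :=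
  rfl

lemma qMap_eqToHom {A B : C} (h : A = B) :
    qMap P (eqToHom h) = eqToHom (congrArg (qObj P) h) := by
  subst h; rfl

noncomputable def qBiprodIsoOfRight [HasBinaryBiproducts C] {B M : C} (hM : P M) :
    qObj P (B ⊞ M) ≅ qObj P B where
  hom := qMap P biprod.fst
  inv := qMap P biprod.inl
  hom_inv_id := by
    refine (QuotientAddGroup.eq (s := xSub P _ _)).mpr (AddSubgroup.subset_closure ?_)
    refine ⟨M, biprod.snd, biprod.inr, hM, ?_⟩
    rw [neg_add_eq_sub, sub_eq_iff_eq_add, add_comm, biprod.total]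
  inv_hom_id := congrArg QuotientAddGroup.mk biprod.inl_fst

end Quotient

section StandardNCokernel
variable [Preadditive C] {P : C → Prop} {n : ℕ} (XX : C → ℕ → C)
  (dd : ∀ A i, XX A i ⟶ XX A (i + 1)) (eX : ∀ A : C, XX A 0 = A)

lemma exists_nCokernel_chainMap (hn : 1 ≤ n)
    (hNCok : ∀ {A B : C} (f : A ⟶ B), XMonic P f → HasNCokernel n f)
    (hXexact : ∀ A, IsRightNExactSeq n (XX A) (dd A)) (hX1 : ∀ A, P (XX A 1))
    {A B : C} {g : A ⟶ B} (hg : XMonic P g) :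
    ∃ (Y : ℕ → C) (d : ∀ i, Y i ⟶ Y (i + 1)) (a : ∀ i, Y i ⟶ XX (Y 0) i)
      (e0 : Y 0 = A) (e1 : Y 1 = B),
      d 0 = eqToHom e0 ≫ g ≫ eqToHom e1.symm ∧ IsRightNExactSeq n Y d ∧ XMonic P (d 0) ∧
        a 0 = eqToHom (eX (Y 0)).symm ∧ ∀ i, d i ≫ a (i + 1) = a i ≫ dd (Y 0) i := by
  obtain ⟨Y, d, e0, e1, hd0, hY⟩ := hNCok g hg
  have hdm : XMonic P (d 0) := hd0 ▸ (hg.comp_isIso _).isIso_comp _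
  obtain ⟨a, ha0, ha⟩ := exists_chainMap_of_xMonic hn hY hdm (hX1 A)
    (fun i hi => (hXexact A).comp_eq_zero hn hi) (eqToHom e0 ≫ eqToHom (eX A).symm)
  obtain ⟨Y', d', a', e, hd', ha', hcomm⟩ := exists_splice a ha
  obtain rfl : Y' 0 = A := (e 0 (by omega)).trans e0
  have hd'0 : d' 0 = eqToHom rfl ≫ g ≫ eqToHom ((e 1 (by omega)).trans e1).symm := by
    simp [hd' 0 (by omega), hd0]
  refine ⟨Y', d', a', rfl, (e 1 (by omega)).trans e1, hd'0, hY.of_eqToHom_conj hn e hd',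
    hd'0 ▸ (hg.comp_isIso _).isIso_comp _, by simp [ha' 0 (by omega), ha0], hcomm⟩

end StandardNCokernel

section Thm34
variable [Preadditive C] [HasZeroObject C] [HasFiniteBiproducts C] [HasBinaryBiproducts C]

/-- A standard right `(n+2)`-angle in `C/X` (see Theorem 3.4). -/
def IsStdAngle (P : C → Prop) (n : ℕ)
    (XX : C → ℕ → C) (dd : ∀ A i, XX A i ⟶ XX A (i + 1)) (eX : ∀ A : C, XX A 0 = A)
    (S : QObj P ⥤ QObj P)
    (hobj : ∀ A : C, S.obj (qObj P A) = qObj P (XX A (n + 1)))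
    (U : PSeq (C := QObj P) (n + 2) S) : Prop :=
  ∃ (A : ℕ → C) (f : ∀ i, A i ⟶ A (i + 1)) (a : ∀ i, A i ⟶ XX (A 0) i),
    IsRightNExactSeq n A f ∧ XMonic P (f 0) ∧
    a 0 = eqToHom (eX (A 0)).symm ∧ (∀ i, f i ≫ a (i + 1) = a i ≫ dd (A 0) i) ∧
    IsWindowOf (by omega) U (fun j => qObj P (A j)) (fun j => qMap P (f j))
      (psign n (qMap P (a (n + 1))) ≫ eqToHom (hobj (A 0)).symm)

theorem exists_right_angle_on_f_general
    (P : C → Prop) (n : ℕ) (hn : 1 ≤ n)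
    (hNCok : ∀ {A B : C} (f : A ⟶ B), XMonic P f → HasNCokernel n f)
    (XX : C → ℕ → C) (dd : ∀ A i, XX A i ⟶ XX A (i + 1)) (eX : ∀ A : C, XX A 0 = A)
    (hXexact : ∀ A, IsRightNExactSeq n (XX A) (dd A))
    (hXP : ∀ A i, 1 ≤ i → i ≤ n → P (XX A i))
    (hXmono : ∀ A, XMonic P (dd A 0))
    -- the endofunctor `Σ` of Proposition 3.1
    (S : QObj P ⥤ QObj P) (hobj : ∀ A : C, S.obj (qObj P A) = qObj P (XX A (n + 1)))
    {A B : C} (f : A ⟶ B) :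
    XMonic P (biprod.lift f (eqToHom (eX A).symm ≫ dd A 0)) ∧
    ∃ T : PSeq (C := QObj P) (n + 2) S,
      (∃ U, IsStdAngle P n XX dd eX S hobj U ∧ SeqIsoP U T) ∧
      ∃ (e0 : T.X 0 = qObj P A) (e1 : T.X 1 = qObj P B),
        T.f 0 = eqToHom e0 ≫ qMap P f ≫ eqToHom e1.symm := by
  have hmono : XMonic P (biprod.lift f (eqToHom (eX A).symm ≫ dd A 0)) :=
    ((hXmono A).isIso_comp _).biprod_lift f
  refine ⟨hmono, ?_⟩
  obtain ⟨Y, d, a, e0, e1, hd0, hY, hdm, ha0, ha⟩ := exists_nCokernel_chainMap XX dd eX hn hNCok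
    hXexact (fun A => hXP A 1 le_rfl hn) hmono
  obtain ⟨T, hUT, E0, E1, hT0⟩ := PSeq.exists_seqIsoP_ofWindow_f_zero_comp (S := S) (m := n + 2)
    (hm := by omega) (g := fun j => qMap P (d j))
    (w := psign n (qMap P (a (n + 1))) ≫ eqToHom (hobj (Y 0)).symm) (by omega)
    (eqToIso (congrArg (qObj P) e1) ≪≫ qBiprodIsoOfRight P (hXP A 1 le_rfl hn))
  refine ⟨T, ⟨_, ⟨Y, d, a, hY, hdm, ha0, ha, PSeq.isWindowOf_ofWindow⟩, hUT⟩,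
    E0.trans (congrArg (qObj P) e0), E1, ?_⟩
  have hfst : qMap P (biprod.lift f (eqToHom (eX A).symm ≫ dd A 0)) ≫ qMap P biprod.fst =
      qMap P f :=
    congrArg QuotientAddGroup.mk (biprod.lift_fst _ _)
  simp [hT0, hd0, qBiprodIsoOfRight, qMap_comp, qMap_eqToHom, reassoc_of% hfst]

/-- RN1(c) in Theorem 3.4. For any morphism `f : A ⟶ B` in `C`, the
morphism `(f, α 0)ᵀ : A ⟶ B ⊞ X 1`, where `α 0` is the chosen left `X`-approximation of
`A`, is `X`-monic; consequently there is a right `(n+2)`-angle in `C/X` whose first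
morphism is the class of `f`. -/
theorem exists_right_angle_on_f
    (P : C → Prop) (n : ℕ) (hn : 1 ≤ n)
    (hPiso : ∀ {A B : C}, P A → (A ≅ B) → P B)
    (hPsum : ∀ {A B : C}, P A → P B → P (A ⊞ B))
    (hPsummand : ∀ {A M : C}, P M → ∀ (i : A ⟶ M) (p : M ⟶ A), i ≫ p = 𝟙 A → P A)
    (hCov : ∀ A : C, ∃ (M : C) (f : A ⟶ M), P M ∧ XMonic P f)
    (hNCok : ∀ {A B : C} (f : A ⟶ B), XMonic P f → HasNCokernel n f)
    (hSpecial : ∀ {A M : C} (f : A ⟶ M), P M → XMonic P f → HasSpecialNCokernel P n f)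
    (XX : C → ℕ → C) (dd : ∀ A i, XX A i ⟶ XX A (i + 1)) (eX : ∀ A : C, XX A 0 = A)
    (hXexact : ∀ A, IsRightNExactSeq n (XX A) (dd A))
    (hXP : ∀ A i, 1 ≤ i → i ≤ n → P (XX A i))
    (hXmono : ∀ A, XMonic P (dd A 0))
    -- the endofunctor `Σ` of Proposition 3.1
    (S : QObj P ⥤ QObj P) (hobj : ∀ A : C, S.obj (qObj P A) = qObj P (XX A (n + 1)))
    (hSadd : S.Additive)
    (hSmap : ∀ (A A' : C) (φ : A ⟶ A') (x : ∀ i, XX A i ⟶ XX A' i),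
      x 0 = eqToHom (eX A) ≫ φ ≫ eqToHom (eX A').symm →
      (∀ i, dd A i ≫ x (i + 1) = x i ≫ dd A' i) →
      S.map (qMap P φ) = eqToHom (hobj A) ≫ qMap P (x (n + 1)) ≫ eqToHom (hobj A').symm)
    {A B : C} (f : A ⟶ B) :
    XMonic P (biprod.lift f (eqToHom (eX A).symm ≫ dd A 0)) ∧
    ∃ T : PSeq (C := QObj P) (n + 2) S,
      (∃ U, IsStdAngle P n XX dd eX S hobj U ∧ SeqIsoP U T) ∧
      ∃ (e0 : T.X 0 = qObj P A) (e1 : T.X 1 = qObj P B),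
        T.f 0 = eqToHom e0 ≫ qMap P f ≫ eqToHom e1.symm :=
  exists_right_angle_on_f_general P n hn hNCok XX dd eX hXexact hXP hXmono S hobj f
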